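/- For 1 < p < 3 and p* = 3p/(3−p), the Loss-Yau spinor satisfies ‖ψ‖^{p*}_{L^{p*}(ℝ³)} = 4π ∫₀^∞ (1+r²)^{-p*} r² dr ≥ 4π · 2^{-p*} · 3^{-2} · 2p/(p−1), and ‖(σ·p)ψ‖^p_{L^p(ℝ³)} = 4π·3^p ∫₀^∞ (1+r²)^{-2p} r² dr ≤ 16π·3^{p−1}·p/(4p−3). -/

import Mathlib

open MeasureTheory Real
open scoped ENNReal

noncomputable section

def pauli : Fin 3 → Matrix (Fin 2) (Fin 2) ℂ :=
  ![!![0, 1; 1, 0], !![0, -Complex.I; Complex.I, 0], !![1, 0; 0, -1]]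

abbrev V3 := EuclideanSpace ℝ (Fin 3)
abbrev C2 := EuclideanSpace ℂ (Fin 2)

def sigmaP (f : V3 → C2) (x : V3) : C2 :=
  (WithLp.equiv 2 (Fin 2 → ℂ)).symm
    (-Complex.I • ∑ j : Fin 3, (pauli j).mulVec
      (WithLp.equiv 2 (Fin 2 → ℂ) (fderiv ℝ f x (EuclideanSpace.single j 1))))

def psiLY (x : V3) : C2 :=
  (WithLp.equiv 2 (Fin 2 → ℂ)).symm
    ((((1 + ‖x‖^2) ^ (-(3:ℝ)/2) : ℝ) : ℂ) •
      ((1 : Matrix (Fin 2) (Fin 2) ℂ) +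
        Complex.I • ∑ j : Fin 3, ((x j : ℝ) : ℂ) • pauli j).mulVec ![1, 0])

/-!
The spinor is `ψ = ⟨x⟩⁻³ (1 + i x·σ) e₁` with `⟨x⟩² = 1 + |x|²`. The vector `(1 + i x·σ) e₁` has
length `⟨x⟩`, so `|ψ| = ⟨x⟩⁻²`. Differentiating, the Pauli relations `σⱼ² = 1` and
`(x·σ)² = |x|²` give `(σ·p)ψ = 3⟨x⟩⁻²ψ`, so `|(σ·p)ψ| = 3⟨x⟩⁻⁴`. Both norms are radial, and
`∫ g(|x|) dx = 4π ∫₀^∞ g(r) r² dr`. Finally `max(1, r)² ≤ 1 + r² ≤ 2 max(1, r)²` squeezes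
`∫₀^∞ (1 + r²)^(-q) r² dr` between `2^(-q) I` and `I`, where
`I = ∫₀^∞ max(1, r)^(-2q) r² dr = 1/3 + 1/(2q - 3)` for `q > 3/2`.
-/

open Set

lemma integral_fun_norm_euclideanSpace_fin_three (g : ℝ → ℝ) :
    ∫ x : EuclideanSpace ℝ (Fin 3), g ‖x‖ = 4 * π * ∫ r in Ioi (0:ℝ), g r * r ^ 2 := by
  rw [integral_fun_norm_addHaar, finrank_euclideanSpace_fin, measureReal_def,
    EuclideanSpace.volume_ball_fin_three]
  simp only [ENNReal.ofReal_one, one_pow, one_mul,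
    ENNReal.toReal_ofReal (by positivity : 0 ≤ π * 4 / 3), smul_eq_mul, mul_comm (g _)]
  ring

lemma hasFDerivAt_one_add_norm_sq_rpow {E : Type*} [NormedAddCommGroup E]
    [InnerProductSpace ℝ E] (p : ℝ) (x : E) :
    HasFDerivAt (fun y : E => (1 + ‖y‖ ^ 2) ^ p)
      ((2 * p * (1 + ‖x‖ ^ 2) ^ (p - 1)) • innerSL ℝ x) x :=
  (((hasFDerivAt_id x).norm_sq.const_add 1).rpow_const (Or.inl (by positivity))).congr_fderiv
    (by ext v; simp; ring)

section RadialIntegral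

variable {q : ℝ}

lemma one_add_sq_rpow_neg_le (hq : 0 ≤ q) (r : ℝ) :
    (1 + r ^ 2) ^ (-q) ≤ (max 1 r ^ 2) ^ (-q) := by
  refine Real.rpow_le_rpow_of_nonpos (by positivity) ?_ (neg_nonpos.2 hq)
  rcases le_total r 1 with h | h <;> simp [h, sq_nonneg]

lemma two_rpow_neg_mul_le_one_add_sq_rpow (hq : 0 ≤ q) {r : ℝ} (hr : 0 ≤ r) :
    2 ^ (-q) * (max 1 r ^ 2) ^ (-q) ≤ (1 + r ^ 2) ^ (-q) := by
  rw [← Real.mul_rpow zero_le_two (by positivity)]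
  refine Real.rpow_le_rpow_of_nonpos (by positivity) ?_ (neg_nonpos.2 hq)
  rcases le_total r 1 with h | h
  · rw [max_eq_left h]; nlinarith
  · rw [max_eq_right h]; nlinarith

lemma continuous_one_add_sq_rpow_mul_sq (q : ℝ) :
    Continuous fun r : ℝ => (1 + r ^ 2) ^ (-q) * r ^ 2 :=
  ((continuous_const.add (continuous_pow 2)).rpow_const
    fun r => Or.inl (by positivity : (0:ℝ) < 1 + r ^ 2).ne').mul (continuous_pow 2)

lemma continuous_max_one_sq_rpow_mul_sq (q : ℝ) :
    Continuous fun r : ℝ => (max 1 r ^ 2) ^ (-q) * r ^ 2 :=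
  ((continuous_const.max continuous_id).pow 2 |>.rpow_const
    fun r => Or.inl (pow_pos (one_pos.trans_le (le_max_left 1 r)) 2).ne').mul (continuous_pow 2)

lemma max_one_sq_rpow_mul_sq_eqOn_Ioi (q : ℝ) :
    EqOn (fun r : ℝ => (max 1 r ^ 2) ^ (-q) * r ^ 2) (fun r => r ^ (2 - 2 * q)) (Ioi 1) := by
  intro r (hr : 1 < r)
  have hr0 : 0 < r := one_pos.trans hr
  simp only [max_eq_right hr.le]
  rw [← Real.rpow_natCast, ← Real.rpow_mul hr0.le, ← Real.rpow_add hr0]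
  norm_num
  ring_nf

lemma integrableOn_max_one_sq_rpow_mul_sq_Ioi_one (hq : 3 / 2 < q) :
    IntegrableOn (fun r : ℝ => (max 1 r ^ 2) ^ (-q) * r ^ 2) (Ioi 1) :=
  (integrableOn_Ioi_rpow_of_lt (by linarith) one_pos).congr_fun
    (max_one_sq_rpow_mul_sq_eqOn_Ioi q).symm measurableSet_Ioi

lemma integrableOn_max_one_sq_rpow_mul_sq (hq : 3 / 2 < q) :
    IntegrableOn (fun r : ℝ => (max 1 r ^ 2) ^ (-q) * r ^ 2) (Ioi 0) :=
  Ioc_union_Ioi_eq_Ioi (zero_le_one' ℝ) ▸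
    (continuous_max_one_sq_rpow_mul_sq q).integrableOn_Ioc.union
      (integrableOn_max_one_sq_rpow_mul_sq_Ioi_one hq)

lemma integral_max_one_sq_rpow_mul_sq (hq : 3 / 2 < q) :
    ∫ r in Ioi (0:ℝ), (max 1 r ^ 2) ^ (-q) * r ^ 2 = 1 / 3 + 1 / (2 * q - 3) := by
  rw [← intervalIntegral.integral_interval_add_Ioi'
    ((continuous_max_one_sq_rpow_mul_sq q).intervalIntegrable 0 1)
    (integrableOn_max_one_sq_rpow_mul_sq_Ioi_one hq),
    setIntegral_congr_fun measurableSet_Ioi (max_one_sq_rpow_mul_sq_eqOn_Ioi q),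
    integral_Ioi_rpow_of_lt (by linarith) one_pos,
    intervalIntegral.integral_congr (g := fun r => r ^ 2) fun r hr => ?_, integral_pow]
  · rw [Real.one_rpow, show 2 - 2 * q + 1 = -(2 * q - 3) by ring, div_neg, neg_div, neg_neg]
    norm_num
  · simp only [uIcc_of_le zero_le_one] at hr
    simp [max_eq_left hr.2]

lemma integrableOn_one_add_sq_rpow_mul_sq (hq : 3 / 2 < q) :
    IntegrableOn (fun r : ℝ => (1 + r ^ 2) ^ (-q) * r ^ 2) (Ioi 0) := by
  refine (integrableOn_max_one_sq_rpow_mul_sq hq).mono'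
    (continuous_one_add_sq_rpow_mul_sq q).aestronglyMeasurable
    (ae_restrict_of_forall_mem measurableSet_Ioi fun r _ => ?_)
  rw [Real.norm_of_nonneg (by positivity)]
  exact mul_le_mul_of_nonneg_right (one_add_sq_rpow_neg_le (by linarith) r) (sq_nonneg r)

lemma integral_one_add_sq_rpow_mul_sq_le (hq : 3 / 2 < q) :
    ∫ r in Ioi (0:ℝ), (1 + r ^ 2) ^ (-q) * r ^ 2 ≤ 1 / 3 + 1 / (2 * q - 3) :=
  integral_max_one_sq_rpow_mul_sq hq ▸
    setIntegral_mono_on (integrableOn_one_add_sq_rpow_mul_sq hq)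
      (integrableOn_max_one_sq_rpow_mul_sq hq) measurableSet_Ioi fun r _ =>
        mul_le_mul_of_nonneg_right (one_add_sq_rpow_neg_le (by linarith) r) (sq_nonneg r)

lemma two_rpow_neg_mul_le_integral_one_add_sq_rpow_mul_sq (hq : 3 / 2 < q) :
    2 ^ (-q) * (1 / 3 + 1 / (2 * q - 3)) ≤ ∫ r in Ioi (0:ℝ), (1 + r ^ 2) ^ (-q) * r ^ 2 := by
  rw [← integral_max_one_sq_rpow_mul_sq hq, ← integral_const_mul]
  refine setIntegral_mono_on ((integrableOn_max_one_sq_rpow_mul_sq hq).const_mul _)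
    (integrableOn_one_add_sq_rpow_mul_sq hq) measurableSet_Ioi fun r (hr : 0 < r) => ?_
  rw [← mul_assoc]
  exact mul_le_mul_of_nonneg_right
    (two_rpow_neg_mul_le_one_add_sq_rpow (by linarith) hr.le) (sq_nonneg r)

end RadialIntegral

section LossYauSpinor

open Complex in
def lyDir (j : Fin 3) : C2 := WithLp.toLp 2 (I • (pauli j).mulVec ![1, 0])

def lyVec (x : V3) : C2 := WithLp.toLp 2 ![1, 0] + ∑ j, x j • lyDir j

lemma psiLY_eq_smul (x : V3) : psiLY x = (1 + ‖x‖ ^ 2) ^ (-(3:ℝ)/2) • lyVec x := by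
  ext i
  fin_cases i <;> simp [psiLY, lyVec, lyDir, pauli, Fin.sum_univ_three, Complex.ext_iff]

lemma norm_sq_lyVec (x : V3) : ‖lyVec x‖ ^ 2 = 1 + ‖x‖ ^ 2 := by
  simp [EuclideanSpace.norm_sq_eq, Fin.sum_univ_two, Fin.sum_univ_three, lyVec, lyDir, pauli,
    ← Complex.normSq_eq_norm_sq, Complex.normSq_apply]
  ring

lemma norm_psiLY (x : V3) : ‖psiLY x‖ = (1 + ‖x‖ ^ 2)⁻¹ := by
  have hpos : 0 < 1 + ‖x‖ ^ 2 := by positivity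
  rw [psiLY_eq_smul, norm_smul, Real.norm_of_nonneg (by positivity),
    ← Real.sqrt_sq (norm_nonneg (lyVec x)), norm_sq_lyVec, Real.sqrt_eq_rpow, ← Real.rpow_add hpos,
    ← Real.rpow_neg_one]
  norm_num

lemma hasFDerivAt_lyVec (x : V3) :
    HasFDerivAt lyVec (∑ j, (EuclideanSpace.proj (𝕜 := ℝ) j).smulRight (lyDir j)) x := by
  have h : lyVec = fun y => WithLp.toLp 2 ![1, 0] +
      (∑ j, (EuclideanSpace.proj (𝕜 := ℝ) j).smulRight (lyDir j)) y := by
    ext y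
    simp [lyVec]
  exact h ▸ (ContinuousLinearMap.hasFDerivAt _).const_add _

lemma fderiv_psiLY_single (x : V3) (k : Fin 3) :
    fderiv ℝ psiLY x (EuclideanSpace.single k 1) =
      (1 + ‖x‖ ^ 2) ^ (-(3:ℝ)/2) • lyDir k
        - (3 * (1 + ‖x‖ ^ 2) ^ (-(5:ℝ)/2) * x k) • lyVec x := by
  have hψ : psiLY = fun y => (1 + ‖y‖ ^ 2) ^ (-(3:ℝ)/2) • lyVec y := funext psiLY_eq_smul
  rw [hψ, ((hasFDerivAt_one_add_norm_sq_rpow _ x).fun_smul (hasFDerivAt_lyVec x)).fderiv]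
  simp only [add_apply, smul_apply, sum_apply, ContinuousLinearMap.smulRight_apply,
    PiLp.proj_apply, PiLp.single_apply, ite_smul, one_smul, zero_smul, Finset.sum_ite_eq',
    Finset.mem_univ, ↓reduceIte, coe_innerSL_apply, EuclideanSpace.inner_single_right,
    ringHom_apply, one_mul, smul_eq_mul]
  rw [show 2 * (-(3:ℝ)/2) * (1 + ‖x‖ ^ 2) ^ (-(3:ℝ)/2 - 1) * x k
      = -(3 * (1 + ‖x‖ ^ 2) ^ (-(5:ℝ)/2) * x k) by norm_num, neg_smul, ← sub_eq_add_neg]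

lemma sigmaP_psiLY (x : V3) : sigmaP psiLY x = (3 * (1 + ‖x‖ ^ 2)⁻¹) • psiLY x := by
  obtain ⟨a, ha⟩ : ∃ a, (1 + ‖x‖ ^ 2) ^ (-(5:ℝ)/2) = a := ⟨_, rfl⟩
  have hc : (1 + ‖x‖ ^ 2) ^ (-(3:ℝ)/2) = a * (1 + ‖x‖ ^ 2) := by
    rw [← ha, show -(3:ℝ)/2 = -(5:ℝ)/2 + 1 by norm_num, Real.rpow_add (by positivity),
      Real.rpow_one]
  have hN : ‖x‖ ^ 2 = x 0 ^ 2 + x 1 ^ 2 + x 2 ^ 2 := by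
    simp [EuclideanSpace.norm_sq_eq, Fin.sum_univ_three]
  have hN0 : 1 + ‖x‖ ^ 2 ≠ 0 := by positivity
  rw [psiLY_eq_smul, hc, smul_smul,
    show 3 * (1 + ‖x‖ ^ 2)⁻¹ * (a * (1 + ‖x‖ ^ 2)) = 3 * a by field_simp]
  simp only [sigmaP, fderiv_psiLY_single, ha, hc]
  ext i
  fin_cases i <;> simp [lyVec, lyDir, pauli, Fin.sum_univ_three, hN, Complex.ext_iff, sq] <;>
    constructor <;> ring

lemma norm_sigmaP_psiLY (x : V3) : ‖sigmaP psiLY x‖ = 3 * (1 + ‖x‖ ^ 2) ^ (-(2:ℝ)) := by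
  rw [sigmaP_psiLY, norm_smul, norm_psiLY, Real.norm_of_nonneg (by positivity),
    Real.rpow_neg (by positivity), Real.rpow_two]
  field_simp

lemma integral_norm_psiLY_rpow (q : ℝ) :
    ∫ x : V3, ‖psiLY x‖ ^ q = 4 * π * ∫ r in Ioi (0:ℝ), (1 + r ^ 2) ^ (-q) * r ^ 2 := by
  have h (x : V3) : ‖psiLY x‖ ^ q = (1 + ‖x‖ ^ 2) ^ (-q) := by
    rw [norm_psiLY, Real.inv_rpow (by positivity), Real.rpow_neg (by positivity)]
  simp_rw [h]
  exact integral_fun_norm_euclideanSpace_fin_three fun r => (1 + r ^ 2) ^ (-q)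

lemma integral_norm_sigmaP_psiLY_rpow (p : ℝ) :
    ∫ x : V3, ‖sigmaP psiLY x‖ ^ p =
      4 * π * 3 ^ p * ∫ r in Ioi (0:ℝ), (1 + r ^ 2) ^ (-(2 * p)) * r ^ 2 := by
  have h (r : ℝ) : (3 * (1 + r ^ 2) ^ (-(2:ℝ))) ^ p = 3 ^ p * (1 + r ^ 2) ^ (-(2 * p)) := by
    rw [Real.mul_rpow (by norm_num) (by positivity), ← Real.rpow_mul (by positivity), neg_mul]
  calc ∫ x : V3, ‖sigmaP psiLY x‖ ^ p = ∫ x : V3, 3 ^ p * (1 + ‖x‖ ^ 2) ^ (-(2 * p)) := by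
        simp_rw [norm_sigmaP_psiLY, h]
    _ = 4 * π * ∫ r in Ioi (0:ℝ), 3 ^ p * (1 + r ^ 2) ^ (-(2 * p)) * r ^ 2 :=
        integral_fun_norm_euclideanSpace_fin_three fun r => 3 ^ p * (1 + r ^ 2) ^ (-(2 * p))
    _ = _ := by simp_rw [mul_assoc, integral_const_mul]

end LossYauSpinor

theorem loss_yau_norm_estimates (p : ℝ) (hp1 : 1 < p) (hp3 : p < 3) :
    (∫ x : V3, ‖psiLY x‖ ^ (3 * p / (3 - p))) =
        4 * π * ∫ r in Set.Ioi (0:ℝ), (1 + r ^ 2) ^ (-(3 * p / (3 - p))) * r ^ 2 ∧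
    4 * π * 2 ^ (-(3 * p / (3 - p))) * 3 ^ (-(2:ℝ)) * (2 * p / (p - 1)) ≤
        4 * π * ∫ r in Set.Ioi (0:ℝ), (1 + r ^ 2) ^ (-(3 * p / (3 - p))) * r ^ 2 ∧
    (∫ x : V3, ‖sigmaP psiLY x‖ ^ p) =
        4 * π * 3 ^ p * ∫ r in Set.Ioi (0:ℝ), (1 + r ^ 2) ^ (-(2 * p)) * r ^ 2 ∧
    4 * π * 3 ^ p * (∫ r in Set.Ioi (0:ℝ), (1 + r ^ 2) ^ (-(2 * p)) * r ^ 2) ≤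
        16 * π * 3 ^ (p - 1) * (p / (4 * p - 3)) := by
  have h3p : 0 < 3 - p := by linarith
  have hq : 3 / 2 < 3 * p / (3 - p) := by rw [lt_div_iff₀ h3p]; nlinarith
  refine ⟨integral_norm_psiLY_rpow _, ?_, integral_norm_sigmaP_psiLY_rpow p, ?_⟩
  · calc 4 * π * 2 ^ (-(3 * p / (3 - p))) * 3 ^ (-(2:ℝ)) * (2 * p / (p - 1))
        = 4 * π * (2 ^ (-(3 * p / (3 - p))) * (1 / 3 + 1 / (2 * (3 * p / (3 - p)) - 3))) := by
          have h2q : 2 * (3 * p / (3 - p)) - 3 = 9 * (p - 1) / (3 - p) := by field_simp; ring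
          have hp : p - 1 ≠ 0 := by linarith
          rw [h2q, Real.rpow_neg zero_le_three, Real.rpow_two]
          field_simp
          ring
      _ ≤ _ := by gcongr; exact two_rpow_neg_mul_le_integral_one_add_sq_rpow_mul_sq hq
  · calc _ ≤ 4 * π * 3 ^ p * (1 / 3 + 1 / (2 * (2 * p) - 3)) := by
          gcongr; exact integral_one_add_sq_rpow_mul_sq_le (by linarith)
      _ = 16 * π * 3 ^ (p - 1) * (p / (4 * p - 3)) := by
          have h4p : 4 * p - 3 ≠ 0 := by linarith
          rw [Real.rpow_sub_one three_ne_zero, show 2 * (2 * p) - 3 = 4 * p - 3 by ring]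
          field_simp
          ring
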